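/- If the real sequence (O_d/O_{d-1})_{d≥2} converges to a real number b as d → ∞, then b ≤ (1+√5)/2 (the golden ratio). -/

import Mathlib

/-- The Macaulay bound `a^⟨t⟩`: writing the (unique, greedy) binomial expansion
`a = C(k(t),t) + C(k(t-1),t-1) + ⋯ + C(k(j),j)` with `k(t) > ⋯ > k(j) ≥ j ≥ 1`,
`macaulay t a = C(k(t)+1,t+1) + C(k(t-1)+1,t) + ⋯ + C(k(j)+1,j+1)`.
(The value at `t = 0` is irrelevant for the definitions below.) -/
def macaulay : ℕ → ℕ → ℕ
  | 0, a => a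
  | t+1, a =>
    if a = 0 then 0
    else
      Nat.choose (Nat.findGreatest (fun m => Nat.choose m (t+1) ≤ a) (a + t + 1) + 1) (t+2)
        + macaulay t (a - Nat.choose
            (Nat.findGreatest (fun m => Nat.choose m (t+1) ≤ a) (a + t + 1)) (t+1))

/-- A finite O-sequence `(a_0, a_1, …, a_s)`, encoded as a nonempty list of
positive integers with `a_0 = 1` and `a_{t+1} ≤ a_t^⟨t⟩` for all `1 ≤ t ≤ s-1`. -/
def IsOSeq (l : List ℕ) : Prop :=
  l ≠ [] ∧ (∀ x ∈ l, 0 < x) ∧ l.getD 0 0 = 1 ∧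
    ∀ t : ℕ, 1 ≤ t → t + 1 < l.length → l.getD (t+1) 0 ≤ macaulay t (l.getD t 0)

/-- `numOSeq d` = the number `O_d` of finite O-sequences of multiplicity `d`. -/
noncomputable def numOSeq (d : ℕ) : ℕ := {l : List ℕ | IsOSeq l ∧ l.sum = d}.ncard

/-- `numASeq d` = the number `A_d` of finite O-sequences of multiplicity `d`
whose last entry is strictly greater than `1`. -/
noncomputable def numASeq (d : ℕ) : ℕ :=
  {l : List ℕ | IsOSeq l ∧ l.sum = d ∧ 1 < l.getLastD 0}.ncard

/-- `numOCond p n k d` = the number `O(p,n,k,d)` of finite O-sequences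
`(a_0,…,a_s)` of multiplicity `d` with `s ≤ n`, `a_i = C(p-1+i, i)` for all
`0 ≤ i ≤ k` (in particular `s ≥ k`), and `a_i < C(p-1+i, i)` for `k < i ≤ s`. -/
noncomputable def numOCond (p n k d : ℕ) : ℕ :=
  {l : List ℕ | IsOSeq l ∧ l.sum = d ∧ l.length - 1 ≤ n ∧ k ≤ l.length - 1 ∧
    (∀ i ≤ k, l.getD i 0 = Nat.choose (p - 1 + i) i) ∧
    (∀ i : ℕ, k < i → i < l.length → l.getD i 0 < Nat.choose (p - 1 + i) i)}.ncard

lemma macaulay_zero (t : ℕ) : macaulay t 0 = 0 := by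
  cases t <;> simp [macaulay]

lemma macaulay_pos {t a : ℕ} (ha : 1 ≤ a) : 1 ≤ macaulay t a := by
  induction t with
  | zero => simpa [macaulay]
  | succ t _ =>
    rw [macaulay, if_neg (by omega)]
    have hK : t + 1 ≤ Nat.findGreatest (fun m => Nat.choose m (t+1) ≤ a) (a + t + 1) :=
      Nat.le_findGreatest (by omega) (by simpa using ha)
    have h2 : 0 < Nat.choose
        (Nat.findGreatest (fun m => Nat.choose m (t+1) ≤ a) (a + t + 1) + 1) (t+2) :=
      Nat.choose_pos (by omega)
    omega

lemma macaulay_one (t : ℕ) : macaulay t 1 = 1 := by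
  induction t with
  | zero => rfl
  | succ t _ =>
    rw [macaulay, if_neg one_ne_zero]
    have h2 : (1 + t + 1) = (t + 1) + 1 := by omega
    rw [h2]
    have hP : Nat.findGreatest (fun m => Nat.choose m (t+1) ≤ 1) ((t+1)+1) = t + 1 := by
      rw [Nat.findGreatest_succ, if_neg (by simp [Nat.choose_succ_self_right]),
        Nat.findGreatest_eq (by simp)]
    rw [hP]
    simp [Nat.choose_self, macaulay_zero]

lemma getLastD_eq_getD {l : List ℕ} (h : l ≠ []) :
    l.getLastD 0 = l.getD (l.length - 1) 0 := by
  have hl : l.length - 1 < l.length := by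
    have := List.length_pos_iff.mpr h; omega
  rw [List.getD_eq_getElem _ _ hl, List.getLastD_eq_getLast?,
    List.getLast?_eq_getLast h, Option.getD_some, List.getLast_eq_getElem]

lemma sum_eq_dropLast {l : List ℕ} (h : l ≠ []) :
    l.sum = l.dropLast.sum + l.getLastD 0 := by
  conv_lhs => rw [← List.dropLast_append_getLast h]
  rw [List.sum_append, List.sum_cons, List.sum_nil,
    List.getLastD_eq_getLast?, List.getLast?_eq_getLast h, Option.getD_some]
  omega

lemma IsOSeq.append {l : List ℕ} (hl : IsOSeq l) {a : ℕ} (ha : 0 < a)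
    (hm : l.length = 1 ∨ a ≤ macaulay (l.length - 1) (l.getD (l.length - 1) 0)) :
    IsOSeq (l ++ [a]) := by
  obtain ⟨hne, hpos, h0, hcond⟩ := hl
  have hlen : 1 ≤ l.length := List.length_pos_iff.mpr hne
  refine ⟨by simp, ?_, ?_, ?_⟩
  · intro x hx
    rcases List.mem_append.mp hx with hx | hx
    · exact hpos x hx
    · simp at hx; omega
  · rwa [List.getD_append _ _ _ _ (by omega)]
  · intro t ht htl
    rw [List.length_append, List.length_singleton] at htl
    rcases lt_or_eq_of_le (Nat.lt_succ_iff.mp htl) with h1 | h1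
    · rw [List.getD_append _ _ _ _ h1, List.getD_append _ _ _ _ (by omega)]
      exact hcond t ht h1
    · rw [List.getD_append_right _ _ _ _ (by omega), h1, Nat.sub_self,
        List.getD_append _ _ _ _ (by omega)]
      simp only [List.getD_cons_zero]
      rcases hm with hm | hm
      · omega
      · have : l.length - 1 = t := by omega
        rwa [this] at hm

lemma IsOSeq.dropLast {l : List ℕ} (hl : IsOSeq l) (h2 : 2 ≤ l.length) :
    IsOSeq l.dropLast := by
  obtain ⟨hne, hpos, h0, hcond⟩ := hl
  have hlen : l.dropLast.length = l.length - 1 := List.length_dropLast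
  have key : ∀ i < l.dropLast.length, l.dropLast.getD i 0 = l.getD i 0 := by
    intro i hi
    conv_rhs => rw [← List.dropLast_append_getLast hne]
    rw [List.getD_append _ _ _ _ hi]
  refine ⟨?_, ?_, ?_, ?_⟩
  · rw [← List.length_pos_iff]; omega
  · intro x hx; exact hpos x (List.dropLast_subset l hx)
  · rw [key 0 (by omega)]; exact h0
  · intro t ht htl
    rw [key _ (by omega), key _ (by omega)]
    exact hcond t ht (by omega)

lemma oseq_finite (d : ℕ) : {l : List ℕ | IsOSeq l ∧ l.sum = d}.Finite := by
  rcases Nat.eq_zero_or_pos d with rfl | hd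
  · apply Set.Finite.subset Set.finite_empty
    rintro l ⟨⟨hne, hpos, h0, -⟩, hsum⟩
    exfalso
    rcases l with - | ⟨x, xs⟩
    · exact hne rfl
    · have := hpos x (List.mem_cons_self)
      simp [List.sum_cons] at hsum
      omega
  · have hinj : Function.Injective
        (fun l : {l : List ℕ // l ∈ {l : List ℕ | IsOSeq l ∧ l.sum = d}} =>
          (⟨l.1, fun hi => l.2.1.2.1 _ hi, l.2.2⟩ : Composition d)) := by
      intro l1 l2 hl
      apply Subtype.ext
      exact congrArg Composition.blocks hl
    have : Finite ↥{l : List ℕ | IsOSeq l ∧ l.sum = d} := Finite.of_injective _ hinj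
    exact Set.finite_coe_iff.mp this

lemma aseq_finite (d : ℕ) :
    {l : List ℕ | IsOSeq l ∧ l.sum = d ∧ 1 < l.getLastD 0}.Finite :=
  (oseq_finite d).subset (fun l hl => ⟨hl.1, hl.2.1⟩)

lemma numOSeq_pos (d : ℕ) : 1 ≤ numOSeq (d + 1) := by
  have hmem : List.replicate (d+1) 1 ∈ {l : List ℕ | IsOSeq l ∧ l.sum = d + 1} := by
    constructor
    · refine ⟨by simp, ?_, ?_, ?_⟩
      · intro x hx; rw [List.eq_of_mem_replicate hx]; norm_num
      · rw [List.getD_eq_getElem _ _ (by simp)]; simp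
      · intro t ht htl
        rw [List.length_replicate] at htl
        rw [List.getD_eq_getElem _ _ (by simp; omega),
          List.getD_eq_getElem _ _ (by simp; omega)]
        simp [macaulay_one]
    · simp
  exact Set.ncard_pos (oseq_finite _) |>.mpr ⟨_, hmem⟩

lemma numASeq_pos (d : ℕ) : 1 ≤ numASeq (d + 3) := by
  have hmem : [1, d+2] ∈ {l : List ℕ | IsOSeq l ∧ l.sum = d + 3 ∧ 1 < l.getLastD 0} := by
    refine ⟨⟨by simp, ?_, by simp, ?_⟩, by simp; omega, by simp⟩
    · intro x hx; simp at hx; rcases hx with rfl | rfl <;> omega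
    · intro t ht htl; simp at htl; omega
  exact Set.ncard_pos (aseq_finite _) |>.mpr ⟨_, hmem⟩

lemma getD_dropLast {l : List ℕ} (hne : l ≠ []) {i : ℕ} (hi : i < l.dropLast.length) :
    l.dropLast.getD i 0 = l.getD i 0 := by
  conv_rhs => rw [← List.dropLast_append_getLast hne]
  rw [List.getD_append _ _ _ _ hi]

lemma eq_dropLast_append {l : List ℕ} (hne : l ≠ []) :
    l = l.dropLast ++ [l.getLastD 0] := by
  rw [List.getLastD_eq_getLast?, List.getLast?_eq_getLast hne, Option.getD_some]
  exact (List.dropLast_append_getLast hne).symm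

lemma getLastD_concat' (m : List ℕ) (a : ℕ) : (m ++ [a]).getLastD 0 = a := by
  rw [List.getLastD_eq_getLast?, List.getLast?_concat, Option.getD_some]

lemma getLastD_eq_getD' {l : List ℕ} (hne : l ≠ []) :
    l.getLastD 0 = l.getD (l.length - 1) 0 := getLastD_eq_getD hne

lemma mem_A_len2 {l : List ℕ} {d : ℕ}
    (hl : IsOSeq l) (hsum : l.sum = d) (hlast : 1 < l.getLastD 0) : 2 ≤ l.length := by
  by_contra hc
  rcases l with - | ⟨x, xs⟩
  · exact hl.1 rfl
  · have h1len : xs = [] := by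
      simp at hc
      exact hc
    subst h1len
    have hx : x = 1 := by simpa using hl.2.2.1
    subst hx
    simp [List.getLastD] at hlast

lemma numOSeq_succ (d : ℕ) : numOSeq (d + 2) = numOSeq (d + 1) + numASeq (d + 2) := by
  classical
  set S := {l : List ℕ | IsOSeq l ∧ l.sum = d + 2} with hS
  set A := {l : List ℕ | IsOSeq l ∧ l.sum = d + 2 ∧ 1 < l.getLastD 0} with hA
  set B := {l : List ℕ | IsOSeq l ∧ l.sum = d + 2 ∧ l.getLastD 0 = 1} with hB
  have hlast : ∀ l ∈ S, 1 ≤ l.getLastD 0 := by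
    rintro l ⟨⟨hne, hpos, -, -⟩, -⟩
    rw [List.getLastD_eq_getLast?, List.getLast?_eq_getLast hne, Option.getD_some]
    exact hpos _ (List.getLast_mem hne)
  have hunion : S = B ∪ A := by
    ext l; constructor
    · intro hl
      rcases eq_or_lt_of_le (hlast l hl) with h1 | h1
      · exact Or.inl ⟨hl.1, hl.2, h1.symm⟩
      · exact Or.inr ⟨hl.1, hl.2, h1⟩
    · rintro (⟨h1, h2, h3⟩ | ⟨h1, h2, h3⟩) <;> exact ⟨h1, h2⟩
  have hdisj : Disjoint B A := by
    rw [Set.disjoint_left]; rintro l ⟨-, -, h3⟩ ⟨-, -, h4⟩; omega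
  have hBfin : B.Finite := (oseq_finite (d+2)).subset (fun l hl => ⟨hl.1, hl.2.1⟩)
  have hAfin : A.Finite := aseq_finite (d+2)
  have himg : B = (fun l : List ℕ => l ++ [1]) '' {l : List ℕ | IsOSeq l ∧ l.sum = d + 1} := by
    ext l; constructor
    · rintro ⟨h1, h2, h3⟩
      have hne := h1.1
      have hlen2 : 2 ≤ l.length := by
        by_contra hc
        rcases l with - | ⟨x, xs⟩
        · exact hne rfl
        · have h1len : xs = [] := by
            simp at hc
            exact hc
          subst h1len
          have hx : x = 1 := by simpa using h1.2.2.1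
          subst hx
          simp at h2
      refine ⟨l.dropLast, ⟨h1.dropLast hlen2, ?_⟩, ?_⟩
      · have := sum_eq_dropLast hne; omega
      · have heq := eq_dropLast_append hne
        rw [h3] at heq
        exact heq.symm
    · rintro ⟨m, ⟨hm1, hm2⟩, rfl⟩
      have hmne := hm1.1
      refine ⟨hm1.append one_pos ?_, by simp [List.sum_append, hm2], getLastD_concat' _ _⟩
      right
      apply macaulay_pos
      rw [← getLastD_eq_getD' hmne, List.getLastD_eq_getLast?,
        List.getLast?_eq_getLast hmne, Option.getD_some]
      exact hm1.2.1 _ (List.getLast_mem hmne)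
  have hBcard : B.ncard = numOSeq (d + 1) := by
    rw [himg, Set.ncard_image_of_injOn ((List.append_left_injective [1]).injOn)]
    rfl
  show S.ncard = numOSeq (d+1) + A.ncard
  rw [hunion, Set.ncard_union_eq hdisj hBfin hAfin, hBcard]

lemma numASeq_rec (d : ℕ) : numASeq (d + 4) ≤ numASeq (d + 3) + numASeq (d + 2) := by
  classical
  set A4 := {l : List ℕ | IsOSeq l ∧ l.sum = d + 4 ∧ 1 < l.getLastD 0} with hA4
  set X2 := {l ∈ A4 | l.getLastD 0 = 2} with hX2
  set X3 := {l ∈ A4 | 3 ≤ l.getLastD 0} with hX3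
  have hunion : A4 = X2 ∪ X3 := by
    ext l; constructor
    · intro hl
      rcases Nat.lt_or_ge (l.getLastD 0) 3 with h1 | h1
      · exact Or.inl ⟨hl, by have := hl.2.2; omega⟩
      · exact Or.inr ⟨hl, h1⟩
    · rintro (⟨h1, -⟩ | ⟨h1, -⟩) <;> exact h1
  have hdisj : Disjoint X2 X3 := by
    rw [Set.disjoint_left]; rintro l ⟨-, h3⟩ ⟨-, h4⟩; omega
  have hfin : A4.Finite := aseq_finite (d + 4)
  have hX2fin : X2.Finite := hfin.subset (fun l hl => hl.1)
  have hX3fin : X3.Finite := hfin.subset (fun l hl => hl.1)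
  -- the X3 injection
  have hX3le : X3.ncard ≤ numASeq (d + 3) := by
    set f : List ℕ → List ℕ := fun l => l.dropLast ++ [l.getLastD 0 - 1] with hf
    have himg : f '' X3 ⊆ {l : List ℕ | IsOSeq l ∧ l.sum = d + 3 ∧ 1 < l.getLastD 0} := by
      rintro - ⟨l, ⟨⟨hl, hsum, hlast⟩, h3⟩, rfl⟩
      have hne := hl.1
      have hlen2 : 2 ≤ l.length := mem_A_len2 hl hsum hlast
      have hdsum := sum_eq_dropLast hne
      refine ⟨?_, ?_, ?_⟩
      · refine (hl.dropLast hlen2).append (by omega) ?_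
        rcases eq_or_lt_of_le hlen2 with hl2 | hl2
        · left; rw [List.length_dropLast]; omega
        · right
          have hlen3 : 3 ≤ l.length := hl2
          have hdl : l.dropLast.length = l.length - 1 := List.length_dropLast
          have hidx : l.dropLast.length - 1 < l.dropLast.length := by omega
          rw [getD_dropLast hne hidx, hdl]
          have hcond := hl.2.2.2 (l.length - 2) (by omega) (by omega)
          have he1 : l.length - 2 + 1 = l.length - 1 := by omega
          rw [he1] at hcond
          have he2 : l.length - 1 - 1 = l.length - 2 := by omega
          rw [he2]
          have he3 : l.getD (l.length - 1) 0 = l.getLastD 0 := (getLastD_eq_getD' hne).symm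
          rw [he3] at hcond
          omega
      · rw [List.sum_append, List.sum_cons, List.sum_nil]; omega
      · rw [getLastD_concat']; omega
    have hinj : Set.InjOn f X3 := by
      rintro l1 ⟨⟨hl1, -, -⟩, h31⟩ l2 ⟨⟨hl2, -, -⟩, h32⟩ heq
      have hd : l1.dropLast = l2.dropLast := by
        have := congrArg List.dropLast heq
        simpa [hf, List.dropLast_concat] using this
      have hg : l1.getLastD 0 - 1 = l2.getLastD 0 - 1 := by
        have := congrArg (fun m : List ℕ => m.getLastD 0) heq
        simpa [hf, getLastD_concat'] using this
      have hgl : l1.getLastD 0 = l2.getLastD 0 := by omega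
      rw [eq_dropLast_append hl1.1, eq_dropLast_append hl2.1, hd, hgl]
    calc X3.ncard = (f '' X3).ncard := (Set.ncard_image_of_injOn hinj).symm
      _ ≤ _ := Set.ncard_le_ncard himg (aseq_finite (d + 3))
  -- the X2 injection
  have hX2le : X2.ncard ≤ numASeq (d + 2) := by
    have hlen3 : ∀ l ∈ X2, 3 ≤ l.length := by
      rintro l ⟨⟨hl, hsum, hlast⟩, h2⟩
      have hlen2 : 2 ≤ l.length := mem_A_len2 hl hsum hlast
      rcases eq_or_lt_of_le hlen2 with he | he
      · exfalso
        rcases l with - | ⟨x, xs⟩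
        · exact hl.1 rfl
        · rcases xs with - | ⟨y, ys⟩
          · simp at he
          · have hys : ys = [] := by
              simp at he
              exact he
            subst hys
            have hx : x = 1 := by simpa using hl.2.2.1
            have hy : y = 2 := by simpa [List.getLastD] using h2
            subst hx; subst hy
            simp at hsum
      · exact he
    have himg : List.dropLast '' X2 ⊆
        {l : List ℕ | IsOSeq l ∧ l.sum = d + 2 ∧ 1 < l.getLastD 0} := by
      rintro - ⟨l, hmem, rfl⟩
      have hlen3'' := hlen3 l hmem
      obtain ⟨⟨hl, hsum, hlast⟩, h2⟩ := hmem
      have hne := hl.1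
      have hlen3' : 3 ≤ l.length := hlen3''
      have hdsum := sum_eq_dropLast hne
      have hdl : l.dropLast.length = l.length - 1 := List.length_dropLast
      have hdne : l.dropLast ≠ [] := by
        rw [← List.length_pos_iff]; omega
      refine ⟨hl.dropLast (by omega), by omega, ?_⟩
      rw [getLastD_eq_getD' hdne, getD_dropLast hne (by omega), hdl]
      have he2 : l.length - 1 - 1 = l.length - 2 := by omega
      rw [he2]
      by_contra hc
      have hpos1 : 1 ≤ l.getD (l.length - 2) 0 := by
        apply hl.2.1
        rw [List.getD_eq_getElem _ _ (by omega)]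
        exact List.getElem_mem _
      have heq1 : l.getD (l.length - 2) 0 = 1 := by omega
      have hcond := hl.2.2.2 (l.length - 2) (by omega) (by omega)
      have he1 : l.length - 2 + 1 = l.length - 1 := by omega
      rw [he1, heq1, macaulay_one, ← getLastD_eq_getD' hne, h2] at hcond
      omega
    have hinj : Set.InjOn List.dropLast X2 := by
      rintro l1 ⟨⟨hl1, -, -⟩, h21⟩ l2 ⟨⟨hl2, -, -⟩, h22⟩ heq
      rw [eq_dropLast_append hl1.1, eq_dropLast_append hl2.1, heq, h21, h22]
    calc X2.ncard = (List.dropLast '' X2).ncard := (Set.ncard_image_of_injOn hinj).symm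
      _ ≤ _ := Set.ncard_le_ncard himg (aseq_finite (d + 2))
  have : numASeq (d + 4) = X2.ncard + X3.ncard := by
    show A4.ncard = _
    rw [hunion, Set.ncard_union_eq hdisj hX2fin hX3fin]
  omega


open Filter Topology in
/-- If `(O_d / O_{d-1})_{d ≥ 2}` converges to a real number `b`,
then `b ≤ (1 + √5)/2`. -/
theorem Od_ratio_limit_le_goldenRatio (b : ℝ)
    (h : Tendsto (fun d : ℕ => (numOSeq (d + 2) : ℝ) / (numOSeq (d + 1) : ℝ))
      atTop (𝓝 b)) :
    b ≤ (1 + Real.sqrt 5) / 2 := by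
  have hs5 : (1:ℝ) ≤ Real.sqrt 5 := by
    rw [show (1:ℝ) = Real.sqrt 1 by simp]
    exact Real.sqrt_le_sqrt (by norm_num)
  by_cases hbc : b ≤ 1
  · linarith
  push_neg at hbc
  set O : ℕ → ℝ := fun d => (numOSeq d : ℝ) with hO
  set A : ℕ → ℝ := fun d => (numASeq d : ℝ) with hA
  have hOA : ∀ d : ℕ, O (d + 2) = O (d + 1) + A (d + 2) := by
    intro d
    have := numOSeq_succ d
    simp only [hO, hA]
    exact_mod_cast congrArg (Nat.cast : ℕ → ℝ) this
  have hOpos : ∀ d : ℕ, (0:ℝ) < O (d + 1) := by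
    intro d
    simp only [hO]
    exact_mod_cast numOSeq_pos d
  have hApos : ∀ d : ℕ, (0:ℝ) < A (d + 3) := by
    intro d
    simp only [hA]
    exact_mod_cast numASeq_pos d
  have hArec : ∀ d : ℕ, A (d + 4) ≤ A (d + 3) + A (d + 2) := by
    intro d
    simp only [hA]
    exact_mod_cast numASeq_rec d
  set r : ℕ → ℝ := fun d => O (d + 2) / O (d + 1) with hr
  set g : ℕ → ℝ := fun d => A (d + 3) / A (d + 2) with hgdef
  have hbne : b - 1 ≠ 0 := ne_of_gt (by linarith)
  have hg : Tendsto g atTop (𝓝 b) := by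
    have h1 : Tendsto (fun d : ℕ => ((r (d + 1) - 1) * r d) / (r d - 1)) atTop
        (𝓝 (((b - 1) * b) / (b - 1))) := by
      apply Tendsto.div
      · exact (((h.comp (tendsto_add_atTop_nat 1)).sub_const 1).mul h)
      · exact h.sub_const 1
      · exact hbne
    rw [mul_div_cancel_left₀ b hbne] at h1
    apply h1.congr'
    filter_upwards [eventually_ge_atTop 1] with d hd
    obtain ⟨e, rfl⟩ : ∃ e, d = e + 1 := ⟨d - 1, by omega⟩
    show ((r (e + 2) - 1) * r (e + 1)) / (r (e + 1) - 1) = A (e + 4) / A (e + 3)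
    have hP : (0:ℝ) < O (e + 2) := hOpos (e + 1)
    have hQ : (0:ℝ) < O (e + 3) := hOpos (e + 2)
    have hA3 : (0:ℝ) < A (e + 3) := hApos e
    have h2 : O (e + 3) = O (e + 2) + A (e + 3) := hOA (e + 1)
    have h3 : O (e + 4) = O (e + 3) + A (e + 4) := hOA (e + 2)
    have hr1 : r (e + 1) = O (e + 3) / O (e + 2) := rfl
    have hr2 : r (e + 2) = O (e + 4) / O (e + 3) := rfl
    rw [hr1, hr2, h3, h2]
    have hkey1 : (O (e + 2) + A (e + 3)) / O (e + 2) - 1 = A (e + 3) / O (e + 2) := by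
      field_simp
      ring
    have hkey2 : (O (e + 2) + A (e + 3) + A (e + 4)) / (O (e + 2) + A (e + 3)) - 1
        = A (e + 4) / (O (e + 2) + A (e + 3)) := by
      rw [div_sub_one (by positivity)]
      ring_nf
    rw [hkey1, hkey2]
    rw [div_eq_div_iff (by positivity) (by positivity)]
    field_simp
  have hle : ∀ d : ℕ, g (d + 1) ≤ 1 + 1 / g d := by
    intro d
    have h3 : (0:ℝ) < A (d + 3) := hApos d
    have h2 : (0:ℝ) ≤ A (d + 2) := by simp only [hA]; positivity
    have h1 : 1 / g d = A (d + 2) / A (d + 3) := by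
      show 1 / (A (d + 3) / A (d + 2)) = _
      rw [one_div_div]
    rw [h1]
    show A (d + 4) / A (d + 3) ≤ 1 + A (d + 2) / A (d + 3)
    rw [div_le_iff₀ h3]
    have h6 : (1 + A (d + 2) / A (d + 3)) * A (d + 3) = A (d + 3) + A (d + 2) := by
      field_simp
    rw [h6]
    exact hArec d
  have hb2 : b ≤ 1 + 1 / b := by
    have hgl : Tendsto (fun d : ℕ => g (d + 1)) atTop (𝓝 b) :=
      hg.comp (tendsto_add_atTop_nat 1)
    have hgr : Tendsto (fun d : ℕ => 1 + 1 / g d) atTop (𝓝 (1 + 1 / b)) := by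
      apply Tendsto.const_add
      exact (tendsto_const_nhds.div hg (by linarith))
    exact le_of_tendsto_of_tendsto' hgl hgr hle
  have hbb : b * b ≤ b + 1 := by
    have h0 : (0:ℝ) < b := by linarith
    have h8 := mul_le_mul_of_nonneg_left hb2 h0.le
    have h7 : b * (1 + 1 / b) = b + 1 := by field_simp
    rw [h7] at h8
    exact h8
  nlinarith [Real.sq_sqrt (show (0:ℝ) ≤ 5 by norm_num), Real.sqrt_nonneg 5,
    sq_nonneg (2 * b - 1 - Real.sqrt 5)]
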